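/- arXiv:1709.06077 — 3 statements merged into one kernel-verified Lean document; each statement's English description precedes it below -/
import Mathlib

section
/- Let α ≥ 4 be a real number, and for ξ ∈ ℝ set φ_α(ξ) := ξ|ξ|^α. Define r_α(ξ, ξ₁) := φ_α(ξ) - φ_α(ξ₁) - φ_α(ξ - ξ₁). Then for all real ξ, ξ₁, writing ξ₂ := ξ - ξ₁, one has r_α(ξ, ξ₁) · ξ · ξ₁ · ξ₂ ≥ 0. -/
/-- `φ_α(ξ) = ξ|ξ|^α`. -/
noncomputable def phiAlpha (α ξ : ℝ) : ℝ := ξ * |ξ| ^ α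

/-- The resonance function `r_α(ξ, ξ₁) = φ_α(ξ) - φ_α(ξ₁) - φ_α(ξ - ξ₁)`. -/
noncomputable def rAlpha (α ξ ξ₁ : ℝ) : ℝ := phiAlpha α ξ - phiAlpha α ξ₁ - phiAlpha α (ξ - ξ₁)

lemma phiAlpha_neg (α x : ℝ) : phiAlpha α (-x) = -phiAlpha α x := by
  simp [phiAlpha, abs_neg]

lemma phiAlpha_super (α : ℝ) (hα : 0 ≤ α) {a b : ℝ} (ha : 0 ≤ a) (hb : 0 ≤ b) :
    phiAlpha α a + phiAlpha α b ≤ phiAlpha α (a + b) := by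
  unfold phiAlpha
  have hab : 0 ≤ a + b := by linarith
  rw [abs_of_nonneg ha, abs_of_nonneg hb, abs_of_nonneg hab]
  have h1 : a ^ α ≤ (a + b) ^ α := Real.rpow_le_rpow ha (by linarith) hα
  have h2 : b ^ α ≤ (a + b) ^ α := Real.rpow_le_rpow hb (by linarith) hα
  nlinarith [mul_le_mul_of_nonneg_left h1 ha, mul_le_mul_of_nonneg_left h2 hb]

theorem stmt_4 (α : ℝ) (hα : 4 ≤ α) (ξ ξ₁ : ℝ) :
    0 ≤ rAlpha α ξ ξ₁ * ξ * ξ₁ * (ξ - ξ₁) := by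
  have hα0 : (0:ℝ) ≤ α := by linarith
  have key : ∀ x y : ℝ, 0 ≤ x → 0 ≤ y →
      phiAlpha α x + phiAlpha α y ≤ phiAlpha α (x + y) :=
    fun x y hx hy => phiAlpha_super α hα0 hx hy
  set r := rAlpha α ξ ξ₁ with hrdef
  have hrr : r = phiAlpha α ξ - phiAlpha α ξ₁ - phiAlpha α (ξ - ξ₁) := rfl
  rcases le_total 0 ξ₁ with ha0 | ha0 <;> rcases le_total 0 (ξ - ξ₁) with hb0 | hb0
  · -- ξ₁ ≥ 0, ξ-ξ₁ ≥ 0, ξ ≥ 0, r ≥ 0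
    have hξ : 0 ≤ ξ := by linarith
    have hr : 0 ≤ r := by
      have := key ξ₁ (ξ - ξ₁) ha0 hb0
      rw [show ξ₁ + (ξ - ξ₁) = ξ by ring] at this
      rw [hrr]; linarith
    have := mul_nonneg (mul_nonneg (mul_nonneg hr hξ) ha0) hb0
    linarith
  · -- ξ₁ ≥ 0, ξ-ξ₁ ≤ 0
    rcases le_total 0 ξ with hξ | hξ
    · -- r ≤ 0
      have := key ξ (-(ξ - ξ₁)) hξ (by linarith)
      rw [phiAlpha_neg, show ξ + -(ξ - ξ₁) = ξ₁ by ring] at this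
      have hr : r ≤ 0 := by rw [hrr]; linarith
      have h := mul_nonneg (mul_nonneg (mul_nonneg (neg_nonneg.mpr hr) hξ) ha0)
        (neg_nonneg.mpr hb0)
      nlinarith [h]
    · -- r ≥ 0
      have := key (-ξ) ξ₁ (by linarith) ha0
      rw [phiAlpha_neg, show -ξ + ξ₁ = -(ξ - ξ₁) by ring, phiAlpha_neg] at this
      have hr : 0 ≤ r := by rw [hrr]; linarith
      have h := mul_nonneg (mul_nonneg (mul_nonneg hr (neg_nonneg.mpr hξ)) ha0)
        (neg_nonneg.mpr hb0)
      nlinarith [h]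
  · -- ξ₁ ≤ 0, ξ-ξ₁ ≥ 0
    rcases le_total 0 ξ with hξ | hξ
    · -- r ≤ 0
      have := key ξ (-ξ₁) hξ (by linarith)
      rw [phiAlpha_neg, show ξ + -ξ₁ = ξ - ξ₁ by ring] at this
      have hr : r ≤ 0 := by rw [hrr]; linarith
      have h := mul_nonneg (mul_nonneg (mul_nonneg (neg_nonneg.mpr hr) hξ)
        (neg_nonneg.mpr ha0)) hb0
      nlinarith [h]
    · -- r ≥ 0
      have := key (-ξ) (ξ - ξ₁) (by linarith) hb0
      rw [phiAlpha_neg, show -ξ + (ξ - ξ₁) = -ξ₁ by ring, phiAlpha_neg] at this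
      have hr : 0 ≤ r := by rw [hrr]; linarith
      have h := mul_nonneg (mul_nonneg (mul_nonneg hr (neg_nonneg.mpr hξ))
        (neg_nonneg.mpr ha0)) hb0
      nlinarith [h]
  · -- ξ₁ ≤ 0, ξ-ξ₁ ≤ 0, ξ ≤ 0, r ≤ 0
    have hξ : ξ ≤ 0 := by linarith
    have := key (-ξ₁) (-(ξ - ξ₁)) (by linarith) (by linarith)
    rw [phiAlpha_neg, phiAlpha_neg, show -ξ₁ + -(ξ - ξ₁) = -ξ by ring, phiAlpha_neg] at this
    have hr : r ≤ 0 := by rw [hrr]; linarith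
    have h := mul_nonneg (mul_nonneg (mul_nonneg (neg_nonneg.mpr hr) (neg_nonneg.mpr hξ))
      (neg_nonneg.mpr ha0)) (neg_nonneg.mpr hb0)
    nlinarith [h]
end

section
/- Let α ≥ 4 be a real number. There exists a constant C > 0 (depending only on α) such that for all ξ₁, ξ₂ ∈ ℝ with ξ := ξ₁ + ξ₂ satisfying ξ ξ₁ ξ₂ ≠ 0, one has |r_α(ξ, ξ₁)| ≥ C |ξ_max|^α |ξ_min|, where |ξ_max| := max{|ξ|, |ξ₁|, |ξ₂|} and |ξ_min| := min{|ξ|, |ξ₁|, |ξ₂|}. -/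
lemma phi_pos (α : ℝ) {t : ℝ} (ht : 0 < t) : phiAlpha α t = t ^ (α + 1) := by
  rw [phiAlpha, abs_of_pos ht, Real.rpow_add_one ht.ne', mul_comm]

lemma phi_neg (α : ℝ) {t : ℝ} (ht : t < 0) : phiAlpha α t = -(-t) ^ (α + 1) := by
  rw [phiAlpha, abs_of_neg ht, Real.rpow_add_one (neg_pos.mpr ht).ne']; ring

lemma phi_odd (α t : ℝ) : phiAlpha α (-t) = - phiAlpha α t := by
  simp [phiAlpha]

lemma core_ord (α : ℝ) (hα : 4 ≤ α) {x y : ℝ} (hx : 0 < x) (hy : 0 < y) (hyx : y ≤ x) :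
    x ^ (α + 1) + y ^ (α + 1) + α / 2 ^ α * (x + y) ^ α * y ≤ (x + y) ^ (α + 1) := by
  have hα0 : (0:ℝ) < α := by linarith
  have h1 : x ^ (α + 1) + (α + 1) * (x ^ α * y) ≤ (x + y) ^ (α + 1) := by
    have hb : 1 + (α + 1) * (y / x) ≤ (1 + y / x) ^ (α + 1) :=
      one_add_mul_self_le_rpow_one_add (by have := div_pos hy hx; linarith) (by linarith)
    have hxy : x + y = x * (1 + y / x) := by field_simp
    calc x ^ (α + 1) + (α + 1) * (x ^ α * y)
        = x ^ (α + 1) * (1 + (α + 1) * (y / x)) := by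
          rw [Real.rpow_add_one hx.ne']
          field_simp
      _ ≤ x ^ (α + 1) * (1 + y / x) ^ (α + 1) :=
          mul_le_mul_of_nonneg_left hb (by positivity)
      _ = (x + y) ^ (α + 1) := by
          rw [hxy, Real.mul_rpow hx.le (by positivity)]
  have h2 : y ^ (α + 1) ≤ x ^ α * y := by
    rw [Real.rpow_add_one hy.ne']
    exact mul_le_mul_of_nonneg_right (Real.rpow_le_rpow hy.le hyx hα0.le) hy.le
  have h3 : α / 2 ^ α * (x + y) ^ α * y ≤ α * (x ^ α * y) := by
    have h4 : ((x + y) / 2) ^ α ≤ x ^ α :=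
      Real.rpow_le_rpow (by positivity) (by linarith) hα0.le
    have h5 : ((x + y) / 2) ^ α = (x + y) ^ α / 2 ^ α :=
      Real.div_rpow (by positivity) (by norm_num) α
    rw [h5] at h4
    calc α / 2 ^ α * (x + y) ^ α * y = α * ((x + y) ^ α / 2 ^ α) * y := by ring
      _ ≤ α * x ^ α * y :=
          mul_le_mul_of_nonneg_right (mul_le_mul_of_nonneg_left h4 hα0.le) hy.le
      _ = α * (x ^ α * y) := by ring
  linarith

lemma core (α : ℝ) (hα : 4 ≤ α) {x y : ℝ} (hx : 0 < x) (hy : 0 < y) :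
    α / 2 ^ α * (x + y) ^ α * min x y ≤ (x + y) ^ (α + 1) - x ^ (α + 1) - y ^ (α + 1) := by
  rcases le_total y x with h | h
  · rw [min_eq_right h]; linarith [core_ord α hα hx hy h]
  · rw [min_eq_left h, add_comm x y]; linarith [core_ord α hα hy hx h]

lemma r_eq (α ξ₁ ξ₂ : ℝ) :
    rAlpha α (ξ₁ + ξ₂) ξ₁ = phiAlpha α (ξ₁ + ξ₂) - phiAlpha α ξ₁ - phiAlpha α ξ₂ := by
  rw [rAlpha, add_sub_cancel_left]

lemma aux (α : ℝ) (hα : 4 ≤ α) (ξ₁ ξ₂ : ℝ) (h2 : 0 < ξ₂) (h1 : ξ₁ ≠ 0) (h0 : ξ₁ + ξ₂ ≠ 0) :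
    α / 2 ^ α * max |ξ₁ + ξ₂| (max |ξ₁| |ξ₂|) ^ α * min |ξ₁ + ξ₂| (min |ξ₁| |ξ₂|)
      ≤ |rAlpha α (ξ₁ + ξ₂) ξ₁| := by
  rw [r_eq]
  rcases h1.lt_or_gt with hn | hp
  · -- ξ₁ < 0
    rcases h0.lt_or_gt with hs | hs
    · -- ξ₁ + ξ₂ < 0 : x = ξ₂, y = -(ξ₁+ξ₂), x + y = -ξ₁
      have key := core α hα h2 (y := -(ξ₁ + ξ₂)) (by linarith)
      have e1 : ξ₂ + -(ξ₁ + ξ₂) = -ξ₁ := by ring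
      rw [e1] at key
      rw [abs_of_neg hs, abs_of_neg hn, abs_of_pos h2]
      have m1 : max (-(ξ₁ + ξ₂)) (max (-ξ₁) ξ₂) = -ξ₁ := by
        rw [max_eq_right (le_max_of_le_left (by linarith)), max_eq_left (by linarith)]
      have m2 : min (-(ξ₁ + ξ₂)) (min (-ξ₁) ξ₂) = min ξ₂ (-(ξ₁ + ξ₂)) := by
        rw [min_eq_right (by linarith : ξ₂ ≤ -ξ₁)]; exact min_comm _ _
      rw [m1, m2]
      have e2 : phiAlpha α (ξ₁ + ξ₂) - phiAlpha α ξ₁ - phiAlpha α ξ₂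
          = (-ξ₁) ^ (α + 1) - ξ₂ ^ (α + 1) - (-(ξ₁ + ξ₂)) ^ (α + 1) := by
        rw [phi_neg α hs, phi_neg α hn, phi_pos α h2]; ring
      rw [e2]
      exact le_trans key (le_abs_self _)
    · -- ξ₁ + ξ₂ > 0 : x = ξ₁ + ξ₂, y = -ξ₁, x + y = ξ₂
      have key := core α hα hs (y := -ξ₁) (by linarith)
      have e1 : (ξ₁ + ξ₂) + -ξ₁ = ξ₂ := by ring
      rw [e1] at key
      rw [abs_of_pos hs, abs_of_neg hn, abs_of_pos h2]
      have m1 : max (ξ₁ + ξ₂) (max (-ξ₁) ξ₂) = ξ₂ := by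
        rw [max_eq_right (le_max_of_le_right (by linarith)), max_eq_right (by linarith)]
      have m2 : min (ξ₁ + ξ₂) (min (-ξ₁) ξ₂) = min (ξ₁ + ξ₂) (-ξ₁) := by
        rw [min_eq_left (by linarith : -ξ₁ ≤ ξ₂)]
      rw [m1, m2]
      have e2 : phiAlpha α (ξ₁ + ξ₂) - phiAlpha α ξ₁ - phiAlpha α ξ₂
          = -(ξ₂ ^ (α + 1) - (ξ₁ + ξ₂) ^ (α + 1) - (-ξ₁) ^ (α + 1)) := by
        rw [phi_neg α hn, phi_pos α hs, phi_pos α h2]; ring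
      rw [e2, abs_neg]
      exact le_trans key (le_abs_self _)
  · -- ξ₁ > 0 : x = ξ₁, y = ξ₂
    have hs : 0 < ξ₁ + ξ₂ := by linarith
    have key := core α hα hp h2
    rw [abs_of_pos hs, abs_of_pos hp, abs_of_pos h2]
    have m1 : max (ξ₁ + ξ₂) (max ξ₁ ξ₂) = ξ₁ + ξ₂ :=
      max_eq_left (max_le (by linarith) (by linarith))
    have m2 : min (ξ₁ + ξ₂) (min ξ₁ ξ₂) = min ξ₁ ξ₂ :=
      min_eq_right ((min_le_left _ _).trans (by linarith))
    rw [m1, m2]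
    have e2 : phiAlpha α (ξ₁ + ξ₂) - phiAlpha α ξ₁ - phiAlpha α ξ₂
        = (ξ₁ + ξ₂) ^ (α + 1) - ξ₁ ^ (α + 1) - ξ₂ ^ (α + 1) := by
      rw [phi_pos α hs, phi_pos α hp, phi_pos α h2]
    rw [e2]
    exact le_trans key (le_abs_self _)

theorem stmt_8 (α : ℝ) (hα : 4 ≤ α) :
    ∃ C > (0 : ℝ), ∀ ξ₁ ξ₂ : ℝ, (ξ₁ + ξ₂) * ξ₁ * ξ₂ ≠ 0 →
      C * max |ξ₁ + ξ₂| (max |ξ₁| |ξ₂|) ^ α * min |ξ₁ + ξ₂| (min |ξ₁| |ξ₂|)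
        ≤ |rAlpha α (ξ₁ + ξ₂) ξ₁| := by
  refine ⟨α / 2 ^ α, by positivity, ?_⟩
  intro ξ₁ ξ₂ h
  have h0 : ξ₁ + ξ₂ ≠ 0 := by
    intro hc; apply h; rw [hc]; ring
  have h1 : ξ₁ ≠ 0 := by
    intro hc; apply h; rw [hc]; ring
  have h2 : ξ₂ ≠ 0 := by
    intro hc; apply h; rw [hc]; ring
  rcases h2.lt_or_gt with hneg | hpos
  · have key := aux α hα (-ξ₁) (-ξ₂) (by linarith) (neg_ne_zero.mpr h1)
      (by rw [← neg_add]; exact neg_ne_zero.mpr h0)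
    have er : rAlpha α (-ξ₁ + -ξ₂) (-ξ₁) = - rAlpha α (ξ₁ + ξ₂) ξ₁ := by
      rw [r_eq, r_eq, show -ξ₁ + -ξ₂ = -(ξ₁ + ξ₂) by ring, phi_odd, phi_odd, phi_odd]
      ring
    rw [er, abs_neg, show -ξ₁ + -ξ₂ = -(ξ₁ + ξ₂) by ring, abs_neg, abs_neg, abs_neg] at key
    exact key
  · exact aux α hα ξ₁ ξ₂ hpos h1 h0
end

section
/- Let s < 0 be a real number. There exists a constant C > 0 (depending only on s, and in particular independent of N) such that for every integer N ≥ 100 and all ξ₁, ξ₂ ∈ ℝ, writing ξ := ξ₁ + ξ₂, one has M(ξ) / ( M(ξ₁) M(ξ₂) ) ≤ C ⟨ξ⟩^s / ( ⟨ξ₁⟩^s ⟨ξ₂⟩^s ). -/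
/-- The I-method multiplier: `M(ξ) = 1` if `|ξ| < N`, and `M(ξ) = (|ξ|/N)^s` if `|ξ| ≥ N`. -/
noncomputable def Imul (s : ℝ) (N : ℕ) (ξ : ℝ) : ℝ :=
  if |ξ| < (N : ℝ) then 1 else (|ξ| / (N : ℝ)) ^ s

theorem stmt_19 (s : ℝ) (hs : s < 0) :
    ∃ C > (0 : ℝ), ∀ N : ℕ, 100 ≤ N → ∀ ξ₁ ξ₂ : ℝ,
      Imul s N (ξ₁ + ξ₂) / (Imul s N ξ₁ * Imul s N ξ₂)
        ≤ C * ((1 + |ξ₁ + ξ₂|) ^ s / ((1 + |ξ₁|) ^ s * (1 + |ξ₂|) ^ s)) := by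
  refine ⟨(100/101 : ℝ) ^ s, Real.rpow_pos_of_pos (by norm_num) s, ?_⟩
  intro N hN ξ₁ ξ₂
  set K : ℝ := (100/101 : ℝ) ^ s with hKdef
  have hK : 0 < K := Real.rpow_pos_of_pos (by norm_num) s
  have hn : (100 : ℝ) ≤ N := by exact_mod_cast hN
  have hn0 : (0:ℝ) < N := by linarith
  -- positivity of Imul
  have hIpos : ∀ x : ℝ, 0 < Imul s N x := by
    intro x
    unfold Imul
    split_ifs with h
    · exact one_pos
    · exact Real.rpow_pos_of_pos (div_pos (lt_of_lt_of_le hn0 (not_lt.mp h)) hn0) s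
  -- lower bound : ((1+|x|)/min (1+|x|) N)^s ≤ Imul s N x
  have key_low : ∀ x : ℝ, ((1+|x|)/min (1+|x|) (N:ℝ))^s ≤ Imul s N x := by
    intro x
    have ha : (0:ℝ) < 1 + |x| := by positivity
    have hg : (0:ℝ) < min (1+|x|) (N:ℝ) := lt_min ha hn0
    unfold Imul
    split_ifs with h
    · exact Real.rpow_le_one_of_one_le_of_nonpos
        ((one_le_div hg).mpr (min_le_left _ _)) hs.le
    · have hxn : (N:ℝ) ≤ |x| := not_lt.mp h
      have hga : min (1+|x|) (N:ℝ) = (N:ℝ) := min_eq_right (by linarith)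
      rw [hga]
      exact Real.rpow_le_rpow_of_nonpos (div_pos (by linarith) hn0)
        (by gcongr; linarith) hs.le
  -- upper bound : Imul s N x ≤ K * ((1+|x|)/min (1+|x|) N)^s
  have key_up : ∀ x : ℝ, Imul s N x ≤ K * ((1+|x|)/min (1+|x|) (N:ℝ))^s := by
    intro x
    have ha : (0:ℝ) < 1 + |x| := by positivity
    have hg : (0:ℝ) < min (1+|x|) (N:ℝ) := lt_min ha hn0
    unfold Imul
    split_ifs with h
    · -- 1 ≤ K * (a/g)^s
      have h1 : (1+|x|)/min (1+|x|) (N:ℝ) ≤ 101/100 := by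
        rcases le_total (1+|x|) (N:ℝ) with hc | hc
        · rw [min_eq_left hc, div_self ha.ne']; norm_num
        · rw [min_eq_right hc, div_le_div_iff₀ hn0 (by norm_num)]
          nlinarith [abs_nonneg x]
      have h2 : (101/100 : ℝ)^s ≤ ((1+|x|)/min (1+|x|) (N:ℝ))^s :=
        Real.rpow_le_rpow_of_nonpos (div_pos ha hg) h1 hs.le
      calc (1:ℝ) = ((100/101 : ℝ) * (101/100))^s := by norm_num
        _ = K * (101/100 : ℝ)^s := Real.mul_rpow (by norm_num) (by norm_num)
        _ ≤ K * ((1+|x|)/min (1+|x|) (N:ℝ))^s := by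
            exact mul_le_mul_of_nonneg_left h2 hK.le
    · have hxn : (N:ℝ) ≤ |x| := not_lt.mp h
      have hga : min (1+|x|) (N:ℝ) = (N:ℝ) := min_eq_right (by linarith)
      rw [hga, ← Real.mul_rpow (by norm_num) (by positivity)]
      apply Real.rpow_le_rpow_of_nonpos (by positivity) ?_ hs.le
      rw [mul_div_assoc', div_le_div_iff₀ hn0 hn0]
      nlinarith
  -- abbreviations
  set a : ℝ := 1 + |ξ₁ + ξ₂| with hadef
  set a₁ : ℝ := 1 + |ξ₁| with ha1def
  set a₂ : ℝ := 1 + |ξ₂| with ha2def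
  set g : ℝ := min a (N:ℝ) with hgdef
  set g₁ : ℝ := min a₁ (N:ℝ) with hg1def
  set g₂ : ℝ := min a₂ (N:ℝ) with hg2def
  have ha : (0:ℝ) < a := by positivity
  have ha1 : (0:ℝ) < a₁ := by positivity
  have ha2 : (0:ℝ) < a₂ := by positivity
  have ha1' : (1:ℝ) ≤ a₁ := by simp [ha1def]
  have ha2' : (1:ℝ) ≤ a₂ := by simp [ha2def]
  have hg : (0:ℝ) < g := lt_min ha hn0
  have hg1 : (0:ℝ) < g₁ := lt_min ha1 hn0
  have hg2 : (0:ℝ) < g₂ := lt_min ha2 hn0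
  -- submultiplicativity of g
  have haa : a ≤ a₁ * a₂ := by
    have := abs_add_le ξ₁ ξ₂
    nlinarith [abs_nonneg ξ₁, abs_nonneg ξ₂]
  have hsub : g ≤ g₁ * g₂ := by
    rcases le_total a₁ (N:ℝ) with hc1 | hc1
    · rcases le_total a₂ (N:ℝ) with hc2 | hc2
      · rw [hg1def, hg2def, min_eq_left hc1, min_eq_left hc2]
        exact (min_le_left _ _).trans haa
      · have : g₂ = (N:ℝ) := min_eq_right hc2
        rw [this]
        have h1 : (1:ℝ) ≤ g₁ := le_min ha1' (by linarith)
        calc g ≤ (N:ℝ) := min_le_right _ _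
          _ ≤ g₁ * N := by nlinarith
    · have : g₁ = (N:ℝ) := min_eq_right hc1
      rw [this]
      have h2 : (1:ℝ) ≤ g₂ := le_min ha2' (by linarith)
      calc g ≤ (N:ℝ) := min_le_right _ _
        _ ≤ (N:ℝ) * g₂ := by nlinarith
  have hgs : g₁^s * g₂^s ≤ g^s := by
    rw [← Real.mul_rpow hg1.le hg2.le]
    exact Real.rpow_le_rpow_of_nonpos hg hsub hs.le
  -- rpow positivity
  have has : (0:ℝ) < a^s := Real.rpow_pos_of_pos ha s
  have ha1s : (0:ℝ) < a₁^s := Real.rpow_pos_of_pos ha1 s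
  have ha2s : (0:ℝ) < a₂^s := Real.rpow_pos_of_pos ha2 s
  have hgs0 : (0:ℝ) < g^s := Real.rpow_pos_of_pos hg s
  have hg1s : (0:ℝ) < g₁^s := Real.rpow_pos_of_pos hg1 s
  have hg2s : (0:ℝ) < g₂^s := Real.rpow_pos_of_pos hg2 s
  have hM1 : a₁^s / g₁^s ≤ Imul s N ξ₁ := by
    have := key_low ξ₁
    rwa [Real.div_rpow ha1.le hg1.le] at this
  have hM2 : a₂^s / g₂^s ≤ Imul s N ξ₂ := by
    have := key_low ξ₂
    rwa [Real.div_rpow ha2.le hg2.le] at this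
  have hM : Imul s N (ξ₁ + ξ₂) ≤ K * (a^s / g^s) := by
    have := key_up (ξ₁ + ξ₂)
    rwa [Real.div_rpow ha.le hg.le] at this
  rw [div_le_iff₀ (mul_pos (hIpos ξ₁) (hIpos ξ₂))]
  calc Imul s N (ξ₁ + ξ₂) ≤ K * (a^s / g^s) := hM
    _ ≤ K * (a^s / (g₁^s * g₂^s)) := by
        apply mul_le_mul_of_nonneg_left _ hK.le
        exact div_le_div_of_nonneg_left has.le (mul_pos hg1s hg2s) hgs
    _ = K * (a^s / (a₁^s * a₂^s)) * ((a₁^s / g₁^s) * (a₂^s / g₂^s)) := by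
        field_simp
    _ ≤ K * (a^s / (a₁^s * a₂^s)) * (Imul s N ξ₁ * Imul s N ξ₂) := by
        apply mul_le_mul_of_nonneg_left _ (by positivity)
        exact mul_le_mul hM1 hM2 (by positivity) (hIpos ξ₁).le
end
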